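/- Let n ≥ 2 and let V be a nonzero finite-dimensional complex vector space carrying an irreducible representation ρ of the symmetric group S_n. If the restriction of ρ to the subgroup S_{n-2} (permutations fixing the last two points) is irreducible, then for every k with k ≤ n the restriction of ρ to the subgroup S_k (permutations fixing the points k+1,…,n) is irreducible. -/

import Mathlib

/-- The subgroup of `Equiv.Perm (Fin n)` consisting of permutations fixing every
point with (0-based) index `≥ k`, i.e. the copy of `S_k` inside `S_n`. -/
def permFixFrom (n k : ℕ) : Subgroup (Equiv.Perm (Fin n)) where
  carrier := {σ | ∀ i : Fin n, k ≤ (i : ℕ) → σ i = i}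
  one_mem' := fun _ _ => rfl
  mul_mem' := by
    intro a b ha hb i hi
    have hb' := hb i hi
    have ha' := ha i hi
    simp only [Set.mem_setOf_eq] at *
    rw [Equiv.Perm.mul_apply, hb', ha']
  inv_mem' := by
    intro a ha i hi
    have h := ha i hi
    exact a.injective (by rw [show a (a⁻¹ i) = i from a.apply_symm_apply i, h])

/-- A representation `ρ : G →* (V →ₗ[ℂ] V)` is irreducible if `V` is nonzero and the only
`G`-invariant subspaces are `⊥` and `⊤`. -/
def IsIrreducibleRep {G V : Type*} [Group G] [AddCommGroup V] [Module ℂ V]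
    (ρ : G →* (V →ₗ[ℂ] V)) : Prop :=
  Nontrivial V ∧ ∀ p : Submodule ℂ V, (∀ g : G, ∀ v ∈ p, ρ g v ∈ p) → p = ⊥ ∨ p = ⊤

/-!
The transposition `τ = (n-1 n)` commutes with `S_{n-2}`, so by Schur's lemma it acts on the
irreducible `S_{n-2}`-module `V` as a scalar. All transpositions are conjugate to `τ` and they
generate `S_n`, so every permutation acts as a scalar. Then every subspace of `V` is
`S_{n-2}`-invariant, so `V` is one-dimensional and every restriction of `ρ` is irreducible.
-/

open Equiv Module

section Scalar

variable {G V : Type*} [Group G] [AddCommGroup V] [Module ℂ V]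

theorem IsIrreducibleRep.exists_eq_smul_one_of_commute [FiniteDimensional ℂ V]
    {ρ : G →* (V →ₗ[ℂ] V)} (hρ : IsIrreducibleRep ρ) {T : End ℂ V}
    (hT : ∀ g, Commute T (ρ g)) : ∃ c : ℂ, T = c • 1 := by
  have := hρ.1
  obtain ⟨c, hc⟩ := End.exists_eigenvalue T
  have hinv : ∀ g : G, ∀ v ∈ T.eigenspace c, ρ g v ∈ T.eigenspace c := fun g _ hv =>
    End.mapsTo_genEigenspace_of_comm (hT g) c 1 hv
  have htop : T.eigenspace c = ⊤ := (hρ.2 _ hinv).resolve_left hc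
  exact ⟨c, LinearMap.ext fun v => End.mem_eigenspace_iff.mp (htop ▸ Submodule.mem_top)⟩

theorem IsIrreducibleRep.isSimpleModule_of_forall_eq_smul_one {ρ : G →* (V →ₗ[ℂ] V)}
    (hρ : IsIrreducibleRep ρ) (h : ∀ g, ∃ c : ℂ, ρ g = c • 1) : IsSimpleModule ℂ V := by
  have := hρ.1
  refine { eq_bot_or_eq_top := fun p => hρ.2 p fun g v hv => ?_ }
  obtain ⟨c, hc⟩ := h g
  simpa [hc] using p.smul_mem c hv

theorem isIrreducibleRep_of_isSimpleModule [IsSimpleModule ℂ V] (ρ : G →* (V →ₗ[ℂ] V)) :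
    IsIrreducibleRep ρ :=
  ⟨IsSimpleModule.nontrivial ℂ V, fun p _ => IsSimpleOrder.eq_bot_or_eq_top p⟩

theorem map_eq_smul_one_of_isConj {ρ : G →* (V →ₗ[ℂ] V)} {g g' : G} (hgg' : IsConj g g')
    {c : ℂ} (hg : ρ g = c • 1) : ρ g' = c • 1 := by
  obtain ⟨h, rfl⟩ := isConj_iff.mp hgg'
  rw [map_mul, map_mul, hg, mul_smul_comm, mul_one, smul_mul_assoc, ← map_mul, mul_inv_cancel,
    map_one]

theorem Equiv.Perm.exists_map_eq_smul_one_of_map_swap {α : Type*} [DecidableEq α] [Finite α]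
    {ρ : Perm α →* (V →ₗ[ℂ] V)} {a b : α} (hab : a ≠ b) {c : ℂ} (hc : ρ (swap a b) = c • 1)
    (σ : Perm α) : ∃ d : ℂ, ρ σ = d • 1 := by
  induction σ using Perm.swap_induction_on with
  | one => exact ⟨1, by simp⟩
  | swap_mul σ x y hxy ih =>
    obtain ⟨d, hd⟩ := ih
    refine ⟨c * d, ?_⟩
    rw [map_mul, hd, map_eq_smul_one_of_isConj (isConj_swap hab hxy) hc, smul_mul_smul, mul_one]

end Scalar

theorem commute_swap_of_mem_permFixFrom {n k : ℕ} {σ : Perm (Fin n)} (hσ : σ ∈ permFixFrom n k)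
    {a b : Fin n} (ha : k ≤ a) (hb : k ≤ b) : Commute (swap a b) σ := by
  have h := swap_apply_apply σ a b
  rw [hσ a ha, hσ b hb, eq_mul_inv_iff_mul_eq] at h
  exact h

theorem stmt_2_general (n : ℕ) (hn : 2 ≤ n) (V : Type*) [AddCommGroup V] [Module ℂ V]
    [FiniteDimensional ℂ V] (ρ : Equiv.Perm (Fin n) →* (V →ₗ[ℂ] V))
    (hres : IsIrreducibleRep (ρ.comp (permFixFrom n (n - 2)).subtype)) :
    ∀ k ≤ n, IsIrreducibleRep (ρ.comp (permFixFrom n k).subtype) := by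
  let a : Fin n := ⟨n - 2, by omega⟩
  let b : Fin n := ⟨n - 1, by omega⟩
  have hab : a ≠ b := Fin.ne_of_val_ne (show n - 2 ≠ n - 1 by omega)
  obtain ⟨c, hc⟩ := hres.exists_eq_smul_one_of_commute (T := ρ (swap a b)) fun σ =>
    (commute_swap_of_mem_permFixFrom σ.2 le_rfl (show n - 2 ≤ n - 1 by omega)).map ρ
  have : IsSimpleModule ℂ V := hres.isSimpleModule_of_forall_eq_smul_one fun σ =>
    Perm.exists_map_eq_smul_one_of_map_swap hab hc σ
  exact fun k _ => isIrreducibleRep_of_isSimpleModule _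

/-- If an irreducible representation of `S_n` (`n ≥ 2`) on a nonzero finite-dimensional
complex vector space restricts irreducibly to `S_{n-2}`, then its restriction to `S_k`
is irreducible for every `k ≤ n`. -/
theorem stmt_2 (n : ℕ) (hn : 2 ≤ n) (V : Type*) [AddCommGroup V] [Module ℂ V]
    [FiniteDimensional ℂ V] (ρ : Equiv.Perm (Fin n) →* (V →ₗ[ℂ] V))
    (hρ : IsIrreducibleRep ρ)
    (hres : IsIrreducibleRep (ρ.comp (permFixFrom n (n - 2)).subtype)) :
    ∀ k ≤ n, IsIrreducibleRep (ρ.comp (permFixFrom n k).subtype) :=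
  stmt_2_general n hn V ρ hres
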